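/- arXiv:1612.07354 — 2 statements merged into one kernel-verified Lean document; each statement's English description precedes it below -/
import Mathlib

section
/- Every regular Hausdorff topological space that is a continuous image of a Polish space and has the Menger property is σ-compact. -/
/-!
Let `f : P → X` be a continuous surjection from a Polish space and let `G ⊆ P` be the union of
all open sets whose image lies in a σ-compact set; by second countability `f '' G` itself lies in
a σ-compact set `K`, so if `G = P` then `X = K`. Otherwise, for every open `V ⊄ G` the set
`f '' (V \ G)` has non-compact closure (else `f '' V` would be σ-compactly covered), and in the
regular Lindelöf space `X` this gives a locally finite sequence of open sets meeting it. Pulling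
them back yields small open children of `V`, still not inside `G`, with locally finite images.
Iterating produces a Cantor scheme in `P` each of whose levels has a locally finite image in `X`.
Applying the Menger property to the levels gives finite sets of nodes `T n` such that every point
of `X` avoids, for some `n`, the images of all nodes of level `n` outside `T n`. A branch avoiding
every `T n` converges, by completeness, to a point whose image contradicts this.
-/

def MengerSpace (X : Type*) [TopologicalSpace X] : Prop :=
  ∀ 𝒰 : ℕ → Set (Set X),
    (∀ n, (∀ s ∈ 𝒰 n, IsOpen s) ∧ ⋃₀ 𝒰 n = Set.univ) →
    ∃ ℱ : ℕ → Set (Set X),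
      (∀ n, ℱ n ⊆ 𝒰 n ∧ (ℱ n).Finite) ∧ ⋃ n, ⋃₀ ℱ n = Set.univ

open Set Filter Topology
open scoped ENNReal

section SigmaCompact

variable {P X : Type*} [TopologicalSpace P] [TopologicalSpace X]

theorem IsSigmaCompact.union {s t : Set X} (hs : IsSigmaCompact s) (ht : IsSigmaCompact t) :
    IsSigmaCompact (s ∪ t) := by
  rw [union_eq_iUnion]
  exact isSigmaCompact_iUnion _ fun b => by cases b <;> assumption

theorem exists_isSigmaCompact_image_sUnion_subset [SecondCountableTopology P] (f : P → X) :
    ∃ K, IsSigmaCompact K ∧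
      f '' ⋃₀ {V : Set P | IsOpen V ∧ ∃ K, IsSigmaCompact K ∧ f '' V ⊆ K} ⊆ K := by
  obtain ⟨T, hTc, hTS, hTeq⟩ := TopologicalSpace.isOpen_sUnion_countable
    {V : Set P | IsOpen V ∧ ∃ K, IsSigmaCompact K ∧ f '' V ⊆ K} fun V hV => hV.1
  choose! K hK hVK using fun V (hV : V ∈ T) => (hTS hV).2
  refine ⟨⋃ V ∈ T, K V, isSigmaCompact_biUnion hTc hK, ?_⟩
  rw [← hTeq, sUnion_eq_biUnion, image_iUnion₂]
  exact biUnion_mono subset_rfl hVK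

end SigmaCompact

section LocallyFinite

variable {X : Type*} [TopologicalSpace X]

theorem LocallyFinite.uncurry_of_subset {ι κ : Type*} {A : ι → Set X} {B : ι → κ → Set X}
    (hA : LocallyFinite A) (hB : ∀ i, LocallyFinite (B i)) (hBA : ∀ i k, B i k ⊆ A i) :
    LocallyFinite (Function.uncurry B) := by
  intro x
  obtain ⟨t, ht, hfin⟩ := hA x
  choose s hs hsfin using fun i => hB i x
  refine ⟨t ∩ ⋂ i ∈ hfin.toFinset, s i,
    inter_mem ht ((biInter_finset_mem _).2 fun i _ => hs i), ?_⟩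
  refine (hfin.biUnion fun i _ => (hsfin i).image (Prod.mk i)).subset ?_
  rintro ⟨i, k⟩ ⟨y, hyB, hyt, hys⟩
  have hi : (A i ∩ t).Nonempty := ⟨y, hBA i k hyB, hyt⟩
  exact mem_biUnion hi ⟨k, ⟨y, hyB, mem_iInter₂.1 hys i (hfin.mem_toFinset.2 hi)⟩, rfl⟩

theorem CantorScheme.locallyFinite_level {β : Type*} {C : List β → Set X}
    (hanti : CantorScheme.Antitone C) (hC : ∀ l, LocallyFinite fun b => C (b :: l)) (n : ℕ) :
    LocallyFinite fun v : List.Vector β n => C v.toList := by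
  induction n with
  | zero => exact locallyFinite_of_finite _
  | succ n ih =>
    have hinj : Function.Injective fun v : List.Vector β (n + 1) => (v.tail, v.head) :=
      fun v w h => by
        simp only [Prod.mk.injEq] at h
        rw [← v.cons_head_tail, ← w.cons_head_tail, h.1, h.2]
    convert (ih.uncurry_of_subset (fun v => hC v.toList) fun v b => hanti _ _).comp_injective hinj
      using 2 with v
    simp only [Function.comp_apply, Function.uncurry_apply_pair]
    rw [← List.Vector.toList_cons, v.cons_head_tail]

end LocallyFinite

section Cover

variable {X : Type*} [TopologicalSpace X]

theorem exists_monotone_isOpen_cover_not_subset_closure [RegularSpace X] [LindelofSpace X]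
    {A : Set X} (hA : ¬ IsCompact (closure A)) :
    ∃ O : ℕ → Set X, (∀ n, IsOpen (O n)) ∧ Monotone O ∧ ⋃ n, O n = univ ∧
      ∀ n, ¬ A ⊆ closure (O n) := by
  classical
  rw [isCompact_iff_finite_subcover] at hA
  push Not at hA
  obtain ⟨ι, U, hUo, hAU, hfin⟩ := hA
  obtain ⟨x₀, hx₀⟩ := nonempty_of_not_subset (hfin ∅)
  obtain ⟨i₀, -⟩ := mem_iUnion.1 (hAU hx₀.1)
  have hnhds : ∀ x, ∃ i, ∃ N ∈ 𝓝 x, IsClosed N ∧ N ⊆ U i ∪ (closure A)ᶜ := by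
    intro x
    obtain ⟨i, hi⟩ : ∃ i, x ∈ U i ∪ (closure A)ᶜ := by
      by_cases hx : x ∈ closure A
      · obtain ⟨i, hi⟩ := mem_iUnion.1 (hAU hx)
        exact ⟨i, Or.inl hi⟩
      · exact ⟨i₀, Or.inr hx⟩
    exact ⟨i, exists_mem_nhds_isClosed_subset
      (((hUo i).union isClosed_closure.isOpen_compl).mem_nhds hi)⟩
  choose i N hN hNc hNU using hnhds
  obtain ⟨t, htc, -, ht⟩ := isLindelof_univ.elim_nhds_subcover (fun x => interior (N x))
    fun x _ => interior_mem_nhds.2 (hN x)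
  obtain ⟨x, hxt, -⟩ := mem_iUnion₂.1 (ht (mem_univ x₀))
  obtain ⟨e, rfl⟩ := htc.exists_eq_range ⟨x, hxt⟩
  refine ⟨accumulate fun m => interior (N (e m)), fun n => ?_, monotone_accumulate, ?_,
    fun n hAO => hfin ((Finset.Iic n).image (i ∘ e)) fun x hx => ?_⟩
  · rw [accumulate_def]
    exact isOpen_biUnion fun _ _ => isOpen_interior
  · rw [biUnion_range] at ht
    rw [iUnion_accumulate]
    exact eq_univ_of_univ_subset ht
  · -- `N x` leaves `U (i x)` only outside `closure A`, so finitely many `U (i x)` cover it.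
    have hcl : closure (accumulate (fun m => interior (N (e m))) n) ⊆ ⋃ m ∈ Iic n, N (e m) :=
      closure_minimal (biUnion_mono subset_rfl fun m _ => interior_subset)
        ((finite_Iic n).isClosed_biUnion fun m _ => hNc _)
    obtain ⟨m, hm, hxN⟩ := mem_iUnion₂.1 (hcl (closure_minimal hAO isClosed_closure hx))
    rcases hNU _ hxN with h | h
    · exact mem_iUnion₂.2 ⟨i (e m), Finset.mem_image_of_mem _ (Finset.mem_Iic.2 hm), h⟩
    · exact absurd hx h

theorem exists_locallyFinite_of_monotone_cover {O : ℕ → Set X} (hOo : ∀ n, IsOpen (O n))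
    (hmono : Monotone O) (hcov : ⋃ n, O n = univ) {A : Set X} (hA : ∀ n, ¬ A ⊆ closure (O n)) :
    ∃ U : ℕ → Set X, (∀ n, IsOpen (U n)) ∧ (∀ n, (U n ∩ A).Nonempty) ∧ LocallyFinite U := by
  have hmem : ∀ x, ∃ m, x ∈ O m := fun x => mem_iUnion.1 (hcov ▸ mem_univ x)
  have hnext : ∀ n, ∃ m, (O m \ closure (O n) ∩ A).Nonempty := fun n => by
    obtain ⟨a, haA, ha⟩ := not_subset.1 (hA n)
    obtain ⟨m, hm⟩ := hmem a
    exact ⟨m, a, ⟨hm, ha⟩, haA⟩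
  choose m hm using hnext
  refine ⟨fun n => O (m n) \ closure (O n), fun n => (hOo _).sdiff isClosed_closure, hm,
    fun x => ?_⟩
  obtain ⟨k, hk⟩ := hmem x
  refine ⟨O k, (hOo k).mem_nhds hk, (finite_Iio k).subset fun n hn => ?_⟩
  obtain ⟨y, ⟨-, hy⟩, hyk⟩ := hn
  by_contra hkn
  exact hy (subset_closure (hmono (not_lt.1 hkn) hyk))

end Cover

theorem exists_isOpen_mem_closure_subset_ediam_le {P : Type*} [PseudoEMetricSpace P] {O : Set P}
    {p : P} (hO : O ∈ 𝓝 p) {δ : ℝ≥0∞} (hδ : 0 < δ) :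
    ∃ W, IsOpen W ∧ p ∈ W ∧ closure W ⊆ O ∧ Metric.ediam W ≤ δ := by
  obtain ⟨ε, hε, hεO⟩ := Metric.nhds_basis_closedEBall.mem_iff.1 hO
  have hr : 0 < min ε (δ / 2) := lt_min hε (ENNReal.half_pos hδ.ne')
  refine ⟨Metric.eball p (min ε (δ / 2)), Metric.isOpen_eball, Metric.mem_eball_self hr, ?_, ?_⟩
  · exact (closure_minimal Metric.eball_subset_closedEBall Metric.isClosed_closedEBall).trans
      ((Metric.closedEBall_subset_closedEBall (min_le_left _ _)).trans hεO)
  · calc Metric.ediam (Metric.eball p (min ε (δ / 2))) ≤ 2 * min ε (δ / 2) :=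
          Metric.ediam_eball_le
      _ ≤ 2 * (δ / 2) := by gcongr; exact min_le_right _ _
      _ = δ := ENNReal.mul_div_cancel two_ne_zero ENNReal.ofNat_ne_top

section Children

variable {P X : Type*} [PseudoEMetricSpace P] [TopologicalSpace X] [RegularSpace X]
  [LindelofSpace X]

theorem exists_seq_isOpen_not_subset_locallyFinite_image {f : P → X} (hf : Continuous f)
    {G V : Set P} {K : Set X} (hK : IsSigmaCompact K) (hGK : f '' G ⊆ K)
    (hGmax : ∀ W, IsOpen W → ∀ K', IsSigmaCompact K' → f '' W ⊆ K' → W ⊆ G)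
    (hV : IsOpen V) (hVG : ¬ V ⊆ G) {δ : ℝ≥0∞} (hδ : 0 < δ) :
    ∃ W : ℕ → Set P, (∀ k, IsOpen (W k) ∧ ¬ W k ⊆ G) ∧ (∀ k, closure (W k) ⊆ V) ∧
      (∀ k, Metric.ediam (W k) ≤ δ) ∧ LocallyFinite fun k => f '' W k := by
  have hnc : ¬ IsCompact (closure (f '' (V \ G))) := fun hc => by
    refine hVG (hGmax V hV _ (hc.isSigmaCompact.union hK) ?_)
    calc f '' V ⊆ f '' (V \ G) ∪ f '' G := by
          rw [← image_union, sdiff_union_self]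
          exact image_mono subset_union_left
      _ ⊆ closure (f '' (V \ G)) ∪ K := union_subset_union subset_closure hGK
  obtain ⟨O, hOo, hOmono, hOcov, hO⟩ := exists_monotone_isOpen_cover_not_subset_closure hnc
  obtain ⟨U, hUo, hUA, hUlf⟩ := exists_locallyFinite_of_monotone_cover hOo hOmono hOcov hO
  have hW : ∀ k, ∃ W, (IsOpen W ∧ ¬ W ⊆ G) ∧ closure W ⊆ V ∧ Metric.ediam W ≤ δ ∧
      f '' W ⊆ U k := fun k => by
    obtain ⟨_, hpU, p, ⟨hpV, hpG⟩, rfl⟩ := hUA k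
    obtain ⟨W, hWo, hpW, hWV, hWδ⟩ := exists_isOpen_mem_closure_subset_ediam_le
      (inter_mem (hV.mem_nhds hpV) (((hUo k).preimage hf).mem_nhds hpU)) hδ
    exact ⟨W, ⟨hWo, not_subset.2 ⟨p, hpW, hpG⟩⟩, hWV.trans inter_subset_left, hWδ,
      image_subset_iff.2 (subset_closure.trans (hWV.trans inter_subset_right))⟩
  choose W hW hWV hWδ hWU using hW
  exact ⟨W, hW, hWV, hWδ, hUlf.subset hWU⟩

end Children

theorem exists_scheme_of_forall_exists {α β : Type*} {p : α → Prop}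
    (R : ℕ → α → (β → α) → Prop) {a : α} (ha : p a)
    (h : ∀ n a, p a → ∃ c : β → α, (∀ b, p (c b)) ∧ R n a c) :
    ∃ A : List β → α, ∀ l, p (A l) ∧ R l.length (A l) fun b => A (b :: l) := by
  choose c hc hR using h
  let A : List β → {a // p a} := fun l =>
    l.rec ⟨a, ha⟩ fun b l A => ⟨c l.length A.1 A.2 b, hc _ _ _ b⟩
  exact ⟨fun l => (A l).1, fun l => ⟨(A l).2, hR _ _ (A l).2⟩⟩

theorem CantorScheme.vanishingDiam_of_ediam_le {α β : Type*} [PseudoMetricSpace α]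
    {A : List β → Set α} (h : ∀ l b, Metric.ediam (A (b :: l)) ≤ ((l.length : ℝ≥0∞) + 1)⁻¹) :
    CantorScheme.VanishingDiam A := fun x => by
  rw [← Filter.tendsto_add_atTop_iff_nat 1]
  refine tendsto_of_tendsto_of_tendsto_of_le_of_le tendsto_const_nhds
    (ENNReal.tendsto_inv_nat_nhds_zero.comp (tendsto_add_atTop_nat 1)) (fun _ => zero_le)
    fun n => ?_
  simpa [PiNat.res_succ, PiNat.res_length] using h (PiNat.res x n) (x n)

theorem PiNat.exists_res_succ_notMem {β : Type*} [Infinite β] (T : ℕ → Finset (List β)) :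
    ∃ x : ℕ → β, ∀ n, PiNat.res x (n + 1) ∉ T n := by
  choose next hnext using fun n (l : List β) =>
    ((T n).finite_toSet.preimage (f := (· :: l))
      fun a _ b _ h => List.head_eq_of_cons_eq h).exists_notMem
  let b : ℕ → List β := fun n => n.rec [] fun n l => next n l :: l
  have hres : ∀ n, PiNat.res (fun n => next n (b n)) n = b n := fun n => by
    induction n with
    | zero => rfl
    | succ n ih => rw [PiNat.res_succ, ih]
  exact ⟨fun n => next n (b n), fun n => by rw [PiNat.res_succ, hres]; exact hnext n (b n)⟩

namespace MengerSpace

variable {X : Type*} [TopologicalSpace X]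

theorem exists_iUnion_eq_univ_of_monotone (hX : MengerSpace X) {ι : ℕ → Type*}
    [∀ n, Preorder (ι n)] [∀ n, IsDirectedOrder (ι n)] [∀ n, Nonempty (ι n)]
    (U : ∀ n, ι n → Set X) (hUo : ∀ n i, IsOpen (U n i)) (hmono : ∀ n, Monotone (U n))
    (hU : ∀ n, ⋃ i, U n i = univ) :
    ∃ i : ∀ n, ι n, ⋃ n, U n (i n) = univ := by
  obtain ⟨ℱ, hℱ, hcov⟩ := hX (fun n => range (U n))
    fun n => ⟨forall_mem_range.2 (hUo n), by rw [sUnion_range, hU]⟩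
  have hbound : ∀ n, ∃ i, ⋃₀ ℱ n ⊆ U n i := fun n => by
    obtain ⟨hsub, hfin⟩ := hℱ n
    choose! j hj using fun s (hs : s ∈ ℱ n) => hsub hs
    obtain ⟨b, hb⟩ := (hfin.image j).bddAbove
    exact ⟨b, sUnion_subset fun s hs => hj s hs ▸ hmono n (hb (mem_image_of_mem j hs))⟩
  choose i hi using hbound
  exact ⟨i, eq_univ_of_univ_subset (hcov ▸ iUnion_mono hi)⟩

theorem exists_finset_forall_notMem (hX : MengerSpace X) {ι : ℕ → Type*}
    (F : ∀ n, ι n → Set X) (hF : ∀ n, LocallyFinite (F n)) :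
    ∃ T : ∀ n, Finset (ι n), ∀ x, ∃ n, ∀ i ∉ T n, x ∉ F n i := by
  classical
  obtain ⟨T, hT⟩ := hX.exists_iUnion_eq_univ_of_monotone
    (fun n (T : Finset (ι n)) => (⋃ i : {i // i ∉ T}, closure (F n i))ᶜ)
    (fun n T => (((hF n).closure.comp_injective Subtype.val_injective).isClosed_iUnion
      fun _ => isClosed_closure).isOpen_compl)
    (fun n T T' hTT' => compl_subset_compl.2 <| iUnion_subset fun i =>
      subset_iUnion_of_subset ⟨i, fun hi => i.2 ((hTT' : T ⊆ T') hi)⟩ subset_rfl)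
    fun n => eq_univ_of_forall fun x => mem_iUnion.2
      ⟨((hF n).closure.point_finite x).toFinset, by simp⟩
  refine ⟨T, fun x => ?_⟩
  obtain ⟨n, hn⟩ := mem_iUnion.1 (hT ▸ mem_univ x)
  exact ⟨n, fun i hi hx => hn (mem_iUnion.2 ⟨⟨i, hi⟩, subset_closure hx⟩)⟩

theorem not_forall_locallyFinite_image (hX : MengerSpace X) {P β : Type*} [PseudoMetricSpace P]
    [CompleteSpace P] [Infinite β] {f : P → X} {A : List β → Set P} (hne : ∀ l, (A l).Nonempty)
    (hanti : CantorScheme.ClosureAntitone A) (hdiam : CantorScheme.VanishingDiam A) :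
    ¬ ∀ l, LocallyFinite fun b => f '' A (b :: l) := fun hlf => by
  obtain ⟨T, hT⟩ := hX.exists_finset_forall_notMem (fun n (v : List.Vector β (n + 1)) =>
    f '' A v.toList) fun n => CantorScheme.locallyFinite_level (C := fun l => f '' A l)
      (fun l b => image_mono (hanti.antitone l b)) hlf (n + 1)
  obtain ⟨x, hx⟩ := PiNat.exists_res_succ_notMem fun n =>
    (T n).map ⟨List.Vector.toList, List.Vector.toList_injective⟩
  obtain ⟨p, hp⟩ : (⋂ n, A (PiNat.res x n)).Nonempty :=
    eq_univ_iff_forall.1 (hanti.map_of_vanishingDiam hdiam hne) x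
  obtain ⟨n, hn⟩ := hT (f p)
  exact hn ⟨PiNat.res x (n + 1), PiNat.res_length x _⟩
    (fun h => hx n (Finset.mem_map_of_mem _ h)) (mem_image_of_mem f (mem_iInter.1 hp _))

end MengerSpace

/-- Every regular Hausdorff topological space that is a continuous image of a Polish
space and has the Menger property is σ-compact. -/
theorem menger_continuousImageOfPolish_sigmaCompact (X : Type*) [TopologicalSpace X]
    [T3Space X]
    (himage : ∃ (P : Type) (_ : TopologicalSpace P) (_ : PolishSpace P) (f : P → X),
      Continuous f ∧ Function.Surjective f)
    (hMenger : MengerSpace X) :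
    SigmaCompactSpace X := by
  obtain ⟨P, _, _, f, hf, hfs⟩ := himage
  let := TopologicalSpace.upgradeIsCompletelyMetrizable P
  have := LindelofSpace.of_continuous_surjective hf hfs
  set G := ⋃₀ {V : Set P | IsOpen V ∧ ∃ K, IsSigmaCompact K ∧ f '' V ⊆ K}
  obtain ⟨K, hK, hGK⟩ := exists_isSigmaCompact_image_sUnion_subset f
  have hGmax : ∀ V, IsOpen V → ∀ K', IsSigmaCompact K' → f '' V ⊆ K' → V ⊆ G :=
    fun V hV K' hK' hVK' => subset_sUnion_of_mem ⟨hV, K', hK', hVK'⟩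
  by_cases hG : univ ⊆ G
  · have hKuniv : K = univ := univ_subset_iff.1 <| by
      rw [← hfs.range_eq, ← image_univ]
      exact (image_mono hG).trans hGK
    exact isSigmaCompact_univ_iff.1 (hKuniv ▸ hK)
  obtain ⟨A, hA⟩ := exists_scheme_of_forall_exists (p := fun V : Set P => IsOpen V ∧ ¬ V ⊆ G)
    (fun n V W => (∀ k, closure (W k) ⊆ V) ∧ (∀ k, Metric.ediam (W k) ≤ ((n : ℝ≥0∞) + 1)⁻¹) ∧
      LocallyFinite fun k => f '' W k)
    ⟨isOpen_univ, hG⟩ fun n V hV => exists_seq_isOpen_not_subset_locallyFinite_image hf hK hGK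
      hGmax hV.1 hV.2 (by simp)
  exact absurd (fun l => (hA l).2.2.2) <| hMenger.not_forall_locallyFinite_image
    (fun l => (nonempty_of_not_subset (hA l).1.2).mono sdiff_subset) (fun l => (hA l).2.1)
    (CantorScheme.vanishingDiam_of_ediam_le fun l => (hA l).2.2.1)
end

section
/- If a T1 topological space X is od-Lindelöf, then the subspace of non-isolated points of X is linearly Lindelöf. -/
/-- A space is od-Lindelöf if every cover by open dense subsets has a countable
subcover. -/
def OdLindelof (X : Type*) [TopologicalSpace X] : Prop :=
  ∀ 𝒰 : Set (Set X), (∀ U ∈ 𝒰, IsOpen U ∧ Dense U) → ⋃₀ 𝒰 = Set.univ →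
    ∃ ℱ ⊆ 𝒰, ℱ.Countable ∧ ⋃₀ ℱ = Set.univ

/-- A space is linearly Lindelöf if every open cover that is linearly ordered by
inclusion has a countable subcover. -/
def LinearlyLindelof (Y : Type*) [TopologicalSpace Y] : Prop :=
  ∀ 𝒰 : Set (Set Y), (∀ U ∈ 𝒰, IsOpen U) → IsChain (· ⊆ ·) 𝒰 → ⋃₀ 𝒰 = Set.univ →
    ∃ ℱ ⊆ 𝒰, ℱ.Countable ∧ ⋃₀ ℱ = Set.univ

/-
Pass to a cofinal subchain `𝒪` of open sets that is well-ordered by inclusion, so that every point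
has a first member `O ∈ 𝒪` containing it. The new parts `O \ closure (⋃ {O' ∈ 𝒪 | O' ⊂ O})` are
disjoint open sets with dense union. Removing one non-isolated point from each of them leaves an
open dense set, whose complement `T` is closed and nowhere dense, hence Lindelöf because `X` is
od-Lindelöf. A countable subfamily of `𝒪` covering `T` covers every non-isolated point `y`:
otherwise its members all lie below the first member `O` containing `y`; as `y ∉ T`, `y` lies in
the new part of `O`, and the point chosen there is in `T` but not below `O`.
-/

open Set

section Chain

variable {α : Type*}

theorem IsChain.exists_wellFoundedOn_isCofinalFor [PartialOrder α] {s : Set α}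
    (hs : IsChain (· ≤ ·) s) : ∃ t ⊆ s, t.WellFoundedOn (· < ·) ∧ IsCofinalFor s t := by
  -- the records of an arbitrary well-ordering `r` of `α`
  let r := @WellOrderingRel α
  refine ⟨{a ∈ s | ∀ b ∈ s, r b a → b < a}, sep_subset _ _, ?_, fun a ha => ?_⟩
  · refine WellFoundedOn.mono' (r := r) (fun a ha b hb hab => ?_)
      WellOrderingRel.isWellOrder.wf.wellFoundedOn
    rcases trichotomous_of r a b with h | rfl | h
    · exact h
    · exact absurd hab (lt_irrefl a)
    · exact absurd hab (ha.2 b hb.1 h).not_gt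
  · obtain ⟨b, ⟨hb, hab⟩, hmin⟩ :=
      WellOrderingRel.isWellOrder.wf.has_min {b ∈ s | a ≤ b} ⟨a, ha, le_rfl⟩
    refine ⟨b, ⟨hb, fun c hc hcb => ?_⟩, hab⟩
    have hac : ¬ a ≤ c := fun hac => hmin c ⟨hc, hac⟩ hcb
    rcases hs.total hc hb with hle | hle
    · exact hle.lt_of_ne fun hcb' => hac (hcb' ▸ hab)
    · exact absurd (hab.trans hle) hac

def unionBelow (𝒪 : Set (Set α)) (O : Set α) : Set α :=
  ⋃₀ {O' ∈ 𝒪 | O' < O}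

theorem Set.WellFoundedOn.exists_inter_nonempty_disjoint_unionBelow {𝒪 : Set (Set α)}
    (hwf : 𝒪.WellFoundedOn (· < ·)) {V : Set α} (hV : (V ∩ ⋃₀ 𝒪).Nonempty) :
    ∃ O ∈ 𝒪, (V ∩ O).Nonempty ∧ Disjoint V (unionBelow 𝒪 O) := by
  obtain ⟨x, hxV, O, hO, hxO⟩ := hV
  obtain ⟨O₀, hmin⟩ :=
    (hwf.subset (sep_subset 𝒪 fun O => (V ∩ O).Nonempty)).exists_minimal ⟨O, hO, x, hxV, hxO⟩
  refine ⟨O₀, hmin.1.1, hmin.1.2, disjoint_left.2 fun y hyV ⟨O', ⟨hO', hlt⟩, hyO'⟩ => ?_⟩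
  exact hmin.not_prop_of_lt hlt ⟨hO', y, hyV, hyO'⟩

end Chain

section NewPart

variable {X : Type*} [TopologicalSpace X] {𝒪 : Set (Set X)} {O O' : Set X} {y : X}

def newPart (𝒪 : Set (Set X)) (O : Set X) : Set X :=
  O \ closure (unionBelow 𝒪 O)

theorem IsChain.eq_of_mem_newPart (h𝒪 : IsChain (· ⊆ ·) 𝒪) (hO : O ∈ 𝒪) (hO' : O' ∈ 𝒪)
    (hy : y ∈ O \ unionBelow 𝒪 O) (hy' : y ∈ newPart 𝒪 O') : O' = O := by
  by_contra hne
  rcases h𝒪.total hO' hO with hle | hle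
  · exact hy.2 ⟨O', ⟨hO', hle.lt_of_ne hne⟩, hy'.1⟩
  · exact hy'.2 (subset_closure ⟨O, ⟨hO, hle.lt_of_ne (Ne.symm hne)⟩, hy.1⟩)

theorem IsChain.pairwiseDisjoint_newPart (h𝒪 : IsChain (· ⊆ ·) 𝒪) :
    𝒪.PairwiseDisjoint (newPart 𝒪) := fun _ hO _ hO' hne =>
  disjoint_left.2 fun _ hy hy' =>
    hne (h𝒪.eq_of_mem_newPart hO hO' ⟨hy.1, fun hb => hy.2 (subset_closure hb)⟩ hy').symm

theorem Set.WellFoundedOn.dense_biUnion_newPart (hwf : 𝒪.WellFoundedOn (· < ·))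
    (hcov : ⋃₀ 𝒪 = univ) : Dense (⋃ O ∈ 𝒪, newPart 𝒪 O) := by
  refine dense_iff_inter_open.2 fun V hV hVne => ?_
  obtain ⟨O, hO, ⟨x, hxV, hxO⟩, hdisj⟩ :=
    hwf.exists_inter_nonempty_disjoint_unionBelow (by rwa [hcov, inter_univ])
  exact ⟨x, hxV, mem_biUnion hO ⟨hxO, disjoint_left.1 (hdisj.closure_right hV) hxV⟩⟩

theorem Set.WellFoundedOn.subset_sUnion_of_compl_biUnion_newPart_diff_subset
    (hwf : 𝒪.WellFoundedOn (· < ·)) (hchain : IsChain (· ⊆ ·) 𝒪) (hcov : ⋃₀ 𝒪 = univ)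
    {A S : Set X} (hS : ∀ O ∈ 𝒪, (A ∩ newPart 𝒪 O).Nonempty → (S ∩ newPart 𝒪 O).Nonempty)
    {𝒞 : Set (Set X)} (h𝒞𝒪 : 𝒞 ⊆ 𝒪) (hD𝒞 : (⋃ O ∈ 𝒪, newPart 𝒪 O \ S)ᶜ ⊆ ⋃₀ 𝒞) :
    A ⊆ ⋃₀ 𝒞 := by
  refine fun y hy => by_contra fun hy𝒞 => ?_
  obtain ⟨O, hO, hyO, hdisj⟩ :=
    hwf.exists_inter_nonempty_disjoint_unionBelow (V := {y}) (by rw [hcov]; simp)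
  rw [singleton_inter_nonempty] at hyO
  have hyO' : y ∈ O \ unionBelow 𝒪 O := ⟨hyO, disjoint_singleton_left.1 hdisj⟩
  have h𝒞O : ⋃₀ 𝒞 ⊆ unionBelow 𝒪 O := sUnion_subset fun C hC => by
    rcases hchain.total (h𝒞𝒪 hC) hO with hCO | hOC
    · exact subset_sUnion_of_mem ⟨h𝒞𝒪 hC, hCO.lt_of_ne fun h => hy𝒞 ⟨C, hC, h ▸ hyO⟩⟩
    · exact absurd ⟨C, hC, hOC hyO⟩ hy𝒞
  by_cases hyP : y ∈ newPart 𝒪 O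
  · obtain ⟨s, hsS, hsP⟩ := hS O hO ⟨y, hy, hyP⟩
    refine hsP.2 (subset_closure (h𝒞O (hD𝒞 fun hsD => ?_)))
    obtain ⟨_, _, hsO'⟩ := mem_iUnion₂.1 hsD
    exact hsO'.2 hsS
  · refine hy𝒞 (hD𝒞 fun hyD => hyP ?_)
    obtain ⟨O', hO', hyO''⟩ := mem_iUnion₂.1 hyD
    exact hchain.eq_of_mem_newPart hO hO' hyO' hyO''.1 ▸ hyO''.1

end NewPart

theorem Set.PairwiseDisjoint.exists_subset_inter_subsingleton {ι α : Type*} {s : Set ι}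
    {P : ι → Set α} (hP : s.PairwiseDisjoint P) (A : Set α) :
    ∃ S ⊆ A, ∀ i ∈ s, (S ∩ P i).Subsingleton ∧ ((A ∩ P i).Nonempty → (S ∩ P i).Nonempty) := by
  refine ⟨Set.range fun i : {i // i ∈ s ∧ (A ∩ P i).Nonempty} => i.2.2.some, ?_,
    fun j hj => ⟨?_, ?_⟩⟩
  · rintro _ ⟨i, rfl⟩
    exact i.2.2.some_mem.1
  · rintro _ ⟨⟨⟨i, hi, hne⟩, rfl⟩, hx⟩ _ ⟨⟨⟨i', hi', hne'⟩, rfl⟩, hx'⟩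
    obtain rfl := hP.elim_set hi hj _ hne.some_mem.2 hx
    obtain rfl := hP.elim_set hi' hi _ hne'.some_mem.2 hx'
    rfl
  · exact fun hne => ⟨_, ⟨⟨j, hj, hne⟩, rfl⟩, hne.some_mem.2⟩

section Transversal

variable {ι X : Type*} [TopologicalSpace X] {s : Set ι} {P : ι → Set X} {S : Set X}

theorem isOpen_biUnion_diff_of_subsingleton [T1Space X] (hP : ∀ i ∈ s, IsOpen (P i))
    (hS : ∀ i ∈ s, (S ∩ P i).Subsingleton) : IsOpen (⋃ i ∈ s, P i \ S) :=
  isOpen_biUnion fun i hi => by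
    rw [← sdiff_inter_self_eq_sdiff]
    exact (hP i hi).sdiff (hS i hi).isClosed

theorem dense_biUnion_diff_of_subsingleton (hP : ∀ i ∈ s, IsOpen (P i))
    (hdense : Dense (⋃ i ∈ s, P i)) (hS : ∀ i ∈ s, (S ∩ P i).Subsingleton)
    (hSiso : ∀ x ∈ S, ¬IsOpen {x}) : Dense (⋃ i ∈ s, P i \ S) := by
  refine dense_iff_inter_open.2 fun V hV hVne => ?_
  obtain ⟨x, hxV, hx⟩ := hdense.inter_open_nonempty V hV hVne
  obtain ⟨i, hi, hxP⟩ := mem_iUnion₂.1 hx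
  by_cases hxS : x ∈ S
  · have hVP : (V ∩ P i).Nontrivial := by
      by_contra hsub
      refine hSiso x hxS ?_
      rw [← (not_nontrivial_iff.1 hsub).eq_singleton_of_mem ⟨hxV, hxP⟩]
      exact hV.inter (hP i hi)
    obtain ⟨y, ⟨hyV, hyP⟩, hyx⟩ := hVP.exists_ne x
    refine ⟨y, hyV, mem_biUnion hi ⟨hyP, fun hyS => hyx (hS i hi ⟨hyS, hyP⟩ ⟨hxS, hxP⟩)⟩⟩
  · exact ⟨x, hxV, mem_biUnion hi ⟨hxP, hxS⟩⟩

end Transversal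

namespace OdLindelof

variable {X : Type*} [TopologicalSpace X]

theorem isLindelof_of_isClosed (hX : OdLindelof X) {Z : Set X} (hZ : IsClosed Z)
    (hZint : interior Z = ∅) : IsLindelof Z := by
  refine isLindelof_of_countable_subcover fun {ι} U hU hZU => ?_
  rcases isEmpty_or_nonempty ι with hι | ⟨⟨i₀⟩⟩
  · exact ⟨∅, countable_empty, by simpa using hZU⟩
  let V i := Zᶜ ∪ U i
  obtain ⟨ℱ, hℱV, hℱ, hℱcov⟩ := hX (range V)
    (forall_mem_range.2 fun i => ⟨hZ.isOpen_compl.union (hU i),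
      (interior_eq_empty_iff_dense_compl.1 hZint).mono subset_union_left⟩)
    (eq_univ_of_forall fun x => by
      by_cases hx : x ∈ Z
      · obtain ⟨i, hi⟩ := mem_iUnion.1 (hZU hx)
        exact ⟨V i, mem_range_self i, Or.inr hi⟩
      · exact ⟨V i₀, mem_range_self i₀, Or.inl hx⟩)
  obtain ⟨t, rfl, hinj⟩ := exists_image_eq_injOn_of_subset_range hℱV
  refine ⟨t, countable_of_injective_of_countable_image hinj hℱ, fun z hz => ?_⟩
  obtain ⟨_, ⟨i, hi, rfl⟩, hzi⟩ := hℱcov.symm ▸ mem_univ z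
  exact mem_biUnion hi (hzi.resolve_left (not_not.2 hz))

theorem exists_countable_subset_nonIsolated_subset_sUnion_of_wellFoundedOn [T1Space X]
    (hX : OdLindelof X) {𝒪 : Set (Set X)} (hopen : ∀ O ∈ 𝒪, IsOpen O)
    (hchain : IsChain (· ⊆ ·) 𝒪) (hwf : 𝒪.WellFoundedOn (· < ·)) (hcov : ⋃₀ 𝒪 = univ) :
    ∃ 𝒞 ⊆ 𝒪, 𝒞.Countable ∧ {x : X | ¬IsOpen {x}} ⊆ ⋃₀ 𝒞 := by
  obtain ⟨S, hSiso, hS⟩ :=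
    hchain.pairwiseDisjoint_newPart.exists_subset_inter_subsingleton {x : X | ¬IsOpen {x}}
  have hnewPart_open O (hO : O ∈ 𝒪) : IsOpen (newPart 𝒪 O) := (hopen O hO).sdiff isClosed_closure
  set D := ⋃ O ∈ 𝒪, newPart 𝒪 O \ S
  have hD : IsOpen D := isOpen_biUnion_diff_of_subsingleton hnewPart_open fun O hO => (hS O hO).1
  have hDdense : Dense D := dense_biUnion_diff_of_subsingleton hnewPart_open
    (hwf.dense_biUnion_newPart hcov) (fun O hO => (hS O hO).1) hSiso
  obtain ⟨𝒞, h𝒞𝒪, h𝒞, hD𝒞⟩ := (hX.isLindelof_of_isClosed hD.isClosed_compl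
    (interior_eq_empty_iff_dense_compl.2 (by rwa [compl_compl]))).elim_countable_subcover_image
    (c := fun O => O) hopen (by rw [← sUnion_eq_biUnion, hcov]; exact subset_univ _)
  rw [← sUnion_eq_biUnion] at hD𝒞
  exact ⟨𝒞, h𝒞𝒪, h𝒞, hwf.subset_sUnion_of_compl_biUnion_newPart_diff_subset hchain hcov
    (fun O hO => (hS O hO).2) h𝒞𝒪 hD𝒞⟩

theorem exists_countable_subset_nonIsolated_subset_sUnion [T1Space X] (hX : OdLindelof X)
    {𝒪 : Set (Set X)} (hopen : ∀ O ∈ 𝒪, IsOpen O) (hchain : IsChain (· ⊆ ·) 𝒪)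
    (hcov : ⋃₀ 𝒪 = univ) : ∃ 𝒞 ⊆ 𝒪, 𝒞.Countable ∧ {x : X | ¬IsOpen {x}} ⊆ ⋃₀ 𝒞 := by
  obtain ⟨𝒲, h𝒲𝒪, hwf, hcof⟩ := hchain.exists_wellFoundedOn_isCofinalFor
  have h𝒲cov : ⋃₀ 𝒲 = univ := eq_univ_of_forall fun x => by
    obtain ⟨O, hO, hxO⟩ := hcov.symm ▸ mem_univ x
    obtain ⟨W, hW, hOW⟩ := hcof hO
    exact ⟨W, hW, hOW hxO⟩
  obtain ⟨𝒞, h𝒞𝒲, h𝒞, hN⟩ := hX.exists_countable_subset_nonIsolated_subset_sUnion_of_wellFoundedOn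
    (fun W hW => hopen W (h𝒲𝒪 hW)) (hchain.mono h𝒲𝒪) hwf h𝒲cov
  exact ⟨𝒞, h𝒞𝒲.trans h𝒲𝒪, h𝒞, hN⟩

end OdLindelof

theorem isClosed_setOf_not_isOpen_singleton {X : Type*} [TopologicalSpace X] :
    IsClosed {x : X | ¬IsOpen ({x} : Set X)} :=
  isOpen_compl_iff.1 <| isOpen_iff_forall_mem_open.2 fun x hx =>
    ⟨{x}, singleton_subset_iff.2 hx, not_not.1 hx, rfl⟩

theorem IsClosed.isOpen_compl_union_image_val {X : Type*} [TopologicalSpace X] {Y : Set X}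
    (hY : IsClosed Y) {U : Set Y} (hU : IsOpen U) : IsOpen (Yᶜ ∪ Subtype.val '' U) := by
  obtain ⟨O, hO, rfl⟩ := isOpen_induced_iff.1 hU
  rw [Subtype.image_preimage_coe, union_inter_distrib_left, compl_union_self, univ_inter]
  exact hY.isOpen_compl.union hO

theorem OdLindelof.linearlyLindelof_of_isClosed {X : Type*} [TopologicalSpace X] [T1Space X]
    (hX : OdLindelof X) {Y : Set X} (hY : IsClosed Y) (hYiso : ∀ y ∈ Y, ¬IsOpen {y}) :
    LinearlyLindelof Y := by
  intro 𝒰 hopen hchain hcov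
  obtain rfl | ⟨U₀, hU₀⟩ := 𝒰.eq_empty_or_nonempty
  · exact ⟨∅, subset_rfl, countable_empty, hcov⟩
  let extend (U : Set Y) : Set X := Yᶜ ∪ Subtype.val '' U
  obtain ⟨𝒞, h𝒞, hc, hN𝒞⟩ := hX.exists_countable_subset_nonIsolated_subset_sUnion
    (𝒪 := extend '' 𝒰)
    (forall_mem_image.2 fun U hU => hY.isOpen_compl_union_image_val (hopen U hU))
    (hchain.image_of_map_rel _ _ _ fun U V hUV => union_subset_union_right _ (image_mono hUV))
    (eq_univ_of_forall fun x => by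
      by_cases hx : x ∈ Y
      · obtain ⟨U, hU, hxU⟩ := hcov.symm ▸ mem_univ (⟨x, hx⟩ : Y)
        exact ⟨extend U, mem_image_of_mem _ hU, Or.inr ⟨_, hxU, rfl⟩⟩
      · exact ⟨extend U₀, mem_image_of_mem _ hU₀, Or.inl hx⟩)
  refine ⟨(Subtype.val ⁻¹' ·) '' 𝒞, ?_, hc.image _, eq_univ_of_forall fun y => ?_⟩
  · rintro _ ⟨_, hC, rfl⟩
    obtain ⟨U, hU, rfl⟩ := h𝒞 hC
    simpa [extend, preimage_image_eq _ Subtype.val_injective] using hU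
  · obtain ⟨C, hC, hyC⟩ := hN𝒞 (hYiso y y.2)
    exact ⟨_, mem_image_of_mem _ hC, hyC⟩

/-- If a T1 space is od-Lindelöf, then the subspace of its non-isolated points is
linearly Lindelöf. -/
theorem odLindelof_nonIsolated_linearlyLindelof (X : Type*) [TopologicalSpace X]
    [T1Space X] (h : OdLindelof X) :
    LinearlyLindelof {x : X | ¬ IsOpen ({x} : Set X)} :=
  h.linearlyLindelof_of_isClosed isClosed_setOf_not_isOpen_singleton fun _ hy => hy
end
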